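/- Let G be a bidirected tree with seed set S and boost set B. For every non-seed node u and every neighbor v of u, the activation probability of u in the subtree G_{u\v} satisfies ap_B(u\v) = 1 − ∏_{w ∈ N(u) \ {v}} (1 − ap_B(w\u) · p^B_{wu}). -/

import Mathlib

open Finset
open scoped Classical

noncomputable section

variable {V : Type*}

/-- The probability weight of the live-edge configuration `L ⊆ E`:
each edge `e ∈ E` is independently live with probability `p e`. -/
def edgeWeight [DecidableEq V] (E : Finset (V × V)) (p : V × V → ℝ)
    (L : Finset (V × V)) : ℝ :=
  (∏ e ∈ L, p e) * ∏ e ∈ E \ L, (1 - p e)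

/-- `v` is activated in configuration `L`: it is reachable from some seed in `S`
through live (directed) edges. -/
def Reaches (L : Finset (V × V)) (S : Finset V) (v : V) : Prop :=
  ∃ s ∈ S, Relation.ReflTransGen (fun a b => (a, b) ∈ L) s v

/-- Activation probability of node `v` under the live-edge model with edge set `E`,
edge probabilities `p`, and seed set `S`. -/
def ap [Fintype V] [DecidableEq V] (E : Finset (V × V)) (p : V × V → ℝ)
    (S : Finset V) (v : V) : ℝ :=
  ∑ L ∈ E.powerset, edgeWeight E p L * (if Reaches L S v then 1 else 0)

/-- Expected number of activated nodes lying in the node set `W`. -/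
def spreadOn [Fintype V] [DecidableEq V] (E : Finset (V × V)) (p : V × V → ℝ)
    (S W : Finset V) : ℝ :=
  ∑ L ∈ E.powerset, edgeWeight E p L * ((W.filter (fun v => Reaches L S v)).card : ℝ)

/-- The influence spread `σ_S`: expected total number of activated nodes. -/
def spread [Fintype V] [DecidableEq V] (E : Finset (V × V)) (p : V × V → ℝ)
    (S : Finset V) : ℝ :=
  spreadOn E p S Finset.univ

/-- Boosted edge probabilities: edges pointing into a boosted node use `p'`. -/
def pB (p p' : V × V → ℝ) (B : Finset V) : V × V → ℝ :=
  fun e => if e.2 ∈ B then p' e else p e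

/-- The bidirected edge set of an undirected graph: each undirected edge is
replaced by the two directed edges. -/
def treeEdges [Fintype V] [DecidableEq V] (T : SimpleGraph V) [DecidableRel T.Adj] :
    Finset (V × V) :=
  Finset.univ.filter (fun e => T.Adj e.1 e.2)

/-- `apSub E p S v u` is `ap_B(v\u)`: the activation probability of `v` in the
subtree `G_{v\u}` obtained by removing the directed edges `(u,v)` and `(v,u)`. -/
def apSub [Fintype V] [DecidableEq V] (E : Finset (V × V)) (p : V × V → ℝ)
    (S : Finset V) (v u : V) : ℝ :=
  ap (E \ {(u, v), (v, u)}) p S v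

/-- The set of nodes of the connected component containing `v` w.r.t. edge set `E`. -/
def comp [Fintype V] [DecidableEq V] (E : Finset (V × V)) (v : V) : Finset V :=
  Finset.univ.filter (fun w => Relation.ReflTransGen (fun a b => (a, b) ∈ E) v w)

/-- `gain E p S v u` is `g_B(v\u)`: in the subtree `G_{v\u}`, the expected number of
activated nodes when the seed set is `(S ∩ V(G_{v\u})) ∪ {v}` minus the expected
number when the seed set is `S ∩ V(G_{v\u})`. -/
def gain [Fintype V] [DecidableEq V] (E : Finset (V × V)) (p : V × V → ℝ)
    (S : Finset V) (v u : V) : ℝ :=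
  spreadOn (E \ {(u, v), (v, u)}) p (insert v (S ∩ comp (E \ {(u, v), (v, u)}) v))
      (comp (E \ {(u, v), (v, u)}) v)
    - spreadOn (E \ {(u, v), (v, u)}) p (S ∩ comp (E \ {(u, v), (v, u)}) v)
      (comp (E \ {(u, v), (v, u)}) v)

/-! Since `u` is not a seed, it is activated in `G_{u\v}` exactly when, for some neighbour
`w ≠ v`, the edge `(w, u)` is live and `w` is activated inside its branch: the vertices reached
from `w` without passing through `u`. In a tree the branches at `u` are pairwise edge-disjoint,
so these events are independent across `w`; and the activation of `w` inside its branch has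
probability `ap_B(w\u)`, because a live chain into `w` that avoids the edge `(u, w)` never
leaves the branch. -/

lemma ite_eq_one_sub_prod_of_iff {ι : Type*} {Q : Prop} [Decidable Q] {I : Finset ι}
    {P : ι → Prop} [DecidablePred P] (h : Q ↔ ∃ i ∈ I, P i) :
    (if Q then (1 : ℝ) else 0) = 1 - ∏ i ∈ I, (1 - if P i then 1 else 0) := by
  by_cases hQ : Q
  · obtain ⟨i, hi, hPi⟩ := h.mp hQ
    rw [if_pos hQ, Finset.prod_eq_zero hi (by simp [hPi]), sub_zero]
  · have hP : ∀ i ∈ I, ¬P i := fun i hi hPi => hQ (h.mpr ⟨i, hi, hPi⟩)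
    rw [if_neg hQ, Finset.prod_eq_one fun i hi => by simp [hP i hi], sub_self]

section LiveEdge
variable [DecidableEq V] (p : V × V → ℝ)

def liveExpect (E : Finset (V × V)) (f : Finset (V × V) → ℝ) : ℝ :=
  ∑ L ∈ E.powerset, edgeWeight E p L * f L

lemma ap_eq_liveExpect [Fintype V] (E : Finset (V × V)) (S : Finset V) (v : V) :
    ap E p S v = liveExpect p E (fun L => if Reaches L S v then 1 else 0) :=
  rfl

lemma sum_edgeWeight (E : Finset (V × V)) : ∑ L ∈ E.powerset, edgeWeight E p L = 1 := by
  have h := Finset.prod_add p (fun e => 1 - p e) E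
  simp only [add_sub_cancel, Finset.prod_const_one] at h
  exact h.symm

lemma liveExpect_const (E : Finset (V × V)) (c : ℝ) : liveExpect p E (fun _ => c) = c := by
  rw [liveExpect, ← Finset.sum_mul, sum_edgeWeight, one_mul]

lemma liveExpect_one_sub (E : Finset (V × V)) (f : Finset (V × V) → ℝ) :
    liveExpect p E (fun L => 1 - f L) = 1 - liveExpect p E f := by
  simp only [liveExpect, mul_sub, mul_one, Finset.sum_sub_distrib, sum_edgeWeight]

lemma edgeWeight_union {E₁ E₂ L₁ L₂ : Finset (V × V)} (hE : Disjoint E₁ E₂)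
    (h₁ : L₁ ⊆ E₁) (h₂ : L₂ ⊆ E₂) :
    edgeWeight (E₁ ∪ E₂) p (L₁ ∪ L₂) = edgeWeight E₁ p L₁ * edgeWeight E₂ p L₂ := by
  have hsdiff : (E₁ ∪ E₂) \ (L₁ ∪ L₂) = (E₁ \ L₁) ∪ (E₂ \ L₂) := by
    ext e
    have hE' : e ∈ E₁ → e ∉ E₂ := fun h => Finset.disjoint_left.mp hE h
    have hL₁ : e ∈ L₁ → e ∈ E₁ := fun h => h₁ h
    have hL₂ : e ∈ L₂ → e ∈ E₂ := fun h => h₂ h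
    simp only [Finset.mem_sdiff, Finset.mem_union]
    tauto
  rw [edgeWeight, edgeWeight, edgeWeight, Finset.prod_union (hE.mono h₁ h₂), hsdiff,
    Finset.prod_union (hE.mono Finset.sdiff_subset Finset.sdiff_subset)]
  ring

lemma liveExpect_union_mul {E₁ E₂ : Finset (V × V)} (hE : Disjoint E₁ E₂)
    (f g : Finset (V × V) → ℝ) :
    liveExpect p (E₁ ∪ E₂) (fun L => f (L ∩ E₁) * g (L ∩ E₂)) =
      liveExpect p E₁ f * liveExpect p E₂ g := by
  rw [liveExpect, liveExpect, liveExpect, Finset.sum_mul_sum, ← Finset.sum_product']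
  refine Finset.sum_nbij' (fun L => (L ∩ E₁, L ∩ E₂)) (fun P => P.1 ∪ P.2) ?_ ?_ ?_ ?_ ?_
  · intro L _
    simp only [Finset.mem_product, Finset.mem_powerset]
    exact ⟨Finset.inter_subset_right, Finset.inter_subset_right⟩
  · intro P hP
    simp only [Finset.mem_product, Finset.mem_powerset] at hP ⊢
    exact Finset.union_subset_union hP.1 hP.2
  · intro L hL
    simp only [Finset.mem_powerset] at hL
    dsimp only
    rw [← Finset.inter_union_distrib_left, Finset.inter_eq_left.mpr hL]
  · intro P hP
    simp only [Finset.mem_product, Finset.mem_powerset] at hP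
    have h₁ := Finset.disjoint_of_subset_left hP.1 hE
    have h₂ := Finset.disjoint_of_subset_left hP.2 hE.symm
    rw [Finset.union_inter_distrib_right, Finset.union_inter_distrib_right,
      Finset.inter_eq_left.mpr hP.1, Finset.inter_eq_left.mpr hP.2,
      Finset.disjoint_iff_inter_eq_empty.mp h₁, Finset.disjoint_iff_inter_eq_empty.mp h₂,
      Finset.union_empty, Finset.empty_union]
  · intro L hL
    rw [Finset.mem_powerset] at hL
    have hsplit : L = L ∩ E₁ ∪ L ∩ E₂ := by
      rw [← Finset.inter_union_distrib_left, Finset.inter_eq_left.mpr hL]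
    rw [congrArg (edgeWeight (E₁ ∪ E₂) p) hsplit,
      edgeWeight_union p hE Finset.inter_subset_right Finset.inter_subset_right]
    ring

lemma liveExpect_biUnion_prod {ι : Type*} [DecidableEq ι] (I : Finset ι)
    (E : ι → Finset (V × V)) (hE : (I : Set ι).PairwiseDisjoint E)
    (f : ι → Finset (V × V) → ℝ) :
    liveExpect p (I.biUnion E) (fun L => ∏ i ∈ I, f i (L ∩ E i)) =
      ∏ i ∈ I, liveExpect p (E i) (f i) := by
  induction I using Finset.induction_on with
  | empty => simpa using liveExpect_const p ∅ 1
  | @insert a I ha ih =>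
    have hdisj : Disjoint (E a) (I.biUnion E) :=
      (Finset.disjoint_biUnion_right _ _ _).mpr fun j hj =>
        hE (Finset.mem_insert_self a I) (Finset.mem_insert_of_mem hj) fun h => ha (h ▸ hj)
    have hfactor : ∀ L, ∏ i ∈ insert a I, f i (L ∩ E i) =
        f a (L ∩ E a) * ∏ i ∈ I, f i ((L ∩ I.biUnion E) ∩ E i) := by
      intro L
      rw [Finset.prod_insert ha]
      congr 1
      refine Finset.prod_congr rfl fun i hi => ?_
      rw [Finset.inter_assoc, Finset.inter_eq_right.mpr (Finset.subset_biUnion_of_mem E hi)]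
    simp only [Finset.biUnion_insert, hfactor]
    refine (liveExpect_union_mul p hdisj (f a) fun M => ∏ i ∈ I, f i (M ∩ E i)).trans ?_
    rw [ih (hE.subset (Finset.coe_subset.mpr (Finset.subset_insert a I))),
      Finset.prod_insert ha]

lemma liveExpect_eq_of_inter {E F : Finset (V × V)} (hF : F ⊆ E)
    {f g : Finset (V × V) → ℝ} (hfg : ∀ L ⊆ E, f L = g (L ∩ F)) :
    liveExpect p E f = liveExpect p F g := by
  have hE : E = F ∪ (E \ F) := (Finset.union_sdiff_of_subset hF).symm
  calc liveExpect p E f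
      = liveExpect p (F ∪ (E \ F)) (fun L => g (L ∩ F) * (fun _ => (1 : ℝ)) (L ∩ (E \ F))) := by
        rw [← hE]
        exact Finset.sum_congr rfl fun L hL => by
          simp only [hfg L (Finset.mem_powerset.mp hL), mul_one]
    _ = liveExpect p F g * liveExpect p (E \ F) (fun _ => (1 : ℝ)) :=
        liveExpect_union_mul p Finset.disjoint_sdiff g fun _ => 1
    _ = liveExpect p F g := by rw [liveExpect_const, mul_one]

lemma liveExpect_mem {E : Finset (V × V)} {a : V × V} (ha : a ∈ E) :
    liveExpect p E (fun L => if a ∈ L then 1 else 0) = p a := by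
  rw [liveExpect_eq_of_inter p (Finset.singleton_subset_iff.mpr ha)
    (g := fun L => if a ∈ L then 1 else 0) fun L _ => by simp]
  rw [liveExpect, show ({a} : Finset (V × V)) = insert a ∅ from rfl,
    Finset.sum_powerset_insert (Finset.notMem_empty a)]
  simp [edgeWeight]

end LiveEdge

section Branch
variable {T : SimpleGraph V} {u w x : V}

def branch (T : SimpleGraph V) (u w : V) : Set V := {x | ∃ W : T.Walk w x, u ∉ W.support}

lemma mem_branch_self (hw : w ≠ u) : w ∈ branch T u w :=
  ⟨.nil, by simpa using hw.symm⟩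

lemma ne_of_mem_branch (hx : x ∈ branch T u w) : x ≠ u := by
  rintro rfl
  obtain ⟨W, hW⟩ := hx
  exact hW W.end_mem_support

lemma mem_branch_of_adj {y : V} (hx : x ∈ branch T u w) (hxy : T.Adj x y) (hy : y ≠ u) :
    y ∈ branch T u w := by
  obtain ⟨W, hW⟩ := hx
  refine ⟨W.concat hxy, ?_⟩
  simpa [SimpleGraph.Walk.support_concat, hW] using hy.symm

/-- In a forest, the walk `w → x` avoiding `u` and the path `w → u → x` would be two
distinct paths. -/
lemma eq_of_adj_of_mem_branch (hT : T.IsAcyclic) (hw : T.Adj u w) (hx : T.Adj u x)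
    (hmem : x ∈ branch T u w) : x = w := by
  by_contra hne
  obtain ⟨W, hW⟩ := hmem
  have hviaU : (SimpleGraph.Walk.cons hw.symm hx.toWalk).IsPath := by
    simp [SimpleGraph.Walk.isPath_def, hw.ne', hx.ne, Ne.symm hne]
  have huW : u ∈ W.toPath.val.support := by
    rw [(hT.subsingleton_path w x).elim W.toPath ⟨_, hviaU⟩]
    simp
  exact hW (SimpleGraph.Walk.support_toPath_subset_support W huW)

lemma disjoint_branch (hT : T.IsAcyclic) (hw : T.Adj u w) (hx : T.Adj u x) (hne : w ≠ x) :
    Disjoint (branch T u w) (branch T u x) := by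
  refine Set.disjoint_left.mpr fun a ⟨W, hW⟩ ⟨X, hX⟩ => hne ?_
  refine (eq_of_adj_of_mem_branch hT hw hx ⟨W.append X.reverse, ?_⟩).symm
  rw [SimpleGraph.Walk.support_append, List.mem_append, SimpleGraph.Walk.support_reverse]
  exact fun h => h.elim hW fun h' => hX (List.mem_reverse.mp (List.mem_of_mem_tail h'))

end Branch

section Reach
variable [Fintype V] [DecidableEq V] {T : SimpleGraph V} [DecidableRel T.Adj] {u w : V}

def branchEdges (T : SimpleGraph V) [DecidableRel T.Adj] (u w : V) : Finset (V × V) :=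
  (treeEdges T).filter fun e => e.1 ∈ branch T u w ∧ e.2 ∈ branch T u w

lemma mem_treeEdges {e : V × V} : e ∈ treeEdges T ↔ T.Adj e.1 e.2 := by
  simp [treeEdges]

lemma mem_branchEdges {e : V × V} :
    e ∈ branchEdges T u w ↔ T.Adj e.1 e.2 ∧ e.1 ∈ branch T u w ∧ e.2 ∈ branch T u w := by
  simp [branchEdges, mem_treeEdges]

/-- In a forest, `(u, w)` is the only edge entering the branch through `w` from outside. -/
lemma reflTransGen_branchEdges_of_mem_branch (hT : T.IsAcyclic) (hw : T.Adj u w)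
    {L : Finset (V × V)} (hL : L ⊆ treeEdges T) (huw : (u, w) ∉ L) {a b : V}
    (hab : Relation.ReflTransGen (fun x y => (x, y) ∈ L) a b) (hb : b ∈ branch T u w) :
    a ∈ branch T u w ∧
      Relation.ReflTransGen (fun x y => (x, y) ∈ L ∩ branchEdges T u w) a b := by
  induction hab using Relation.ReflTransGen.head_induction_on with
  | refl => exact ⟨hb, .refl⟩
  | @head a c hac _ ih =>
    obtain ⟨hc, hcb⟩ := ih
    have hadj : T.Adj a c := mem_treeEdges.mp (hL hac)
    have hau : a ≠ u := by
      rintro rfl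
      exact huw (eq_of_adj_of_mem_branch hT hw hadj hc ▸ hac)
    have ha : a ∈ branch T u w := mem_branch_of_adj hc hadj.symm hau
    exact ⟨ha, .head (Finset.mem_inter.mpr ⟨hac, mem_branchEdges.mpr ⟨hadj, ha, hc⟩⟩) hcb⟩

lemma exists_branch_of_reflTransGen {L : Finset (V × V)} (hL : L ⊆ treeEdges T) {a : V}
    (hau : Relation.ReflTransGen (fun x y => (x, y) ∈ L) a u) (ha : a ≠ u) :
    ∃ w, (w, u) ∈ L ∧
      Relation.ReflTransGen (fun x y => (x, y) ∈ L ∩ branchEdges T u w) a w := by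
  suffices ∃ w, (w, u) ∈ L ∧ a ∈ branch T u w ∧
      Relation.ReflTransGen (fun x y => (x, y) ∈ L ∩ branchEdges T u w) a w from
    this.imp fun _ h => ⟨h.1, h.2.2⟩
  induction hau using Relation.ReflTransGen.head_induction_on with
  | refl => exact absurd rfl ha
  | @head a c hac _ ih =>
    have hadj : T.Adj a c := mem_treeEdges.mp (hL hac)
    by_cases hc : c = u
    · subst hc
      exact ⟨a, hac, mem_branch_self ha, .refl⟩
    · obtain ⟨w, hwu, hcw, hchain⟩ := ih hc
      have haw : a ∈ branch T u w := mem_branch_of_adj hcw hadj.symm ha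
      exact ⟨w, hwu, haw,
        .head (Finset.mem_inter.mpr ⟨hac, mem_branchEdges.mpr ⟨hadj, haw, hcw⟩⟩) hchain⟩

lemma reaches_iff_reaches_inter_branchEdges (hT : T.IsAcyclic) (hw : T.Adj u w)
    {L : Finset (V × V)} (hL : L ⊆ treeEdges T \ {(u, w), (w, u)}) (S : Finset V) :
    Reaches L S w ↔ Reaches (L ∩ branchEdges T u w) S w := by
  refine ⟨fun ⟨s, hs, hsw⟩ => ⟨s, hs, ?_⟩, fun ⟨s, hs, hsw⟩ => ⟨s, hs, ?_⟩⟩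
  · have huw : (u, w) ∉ L := fun h => (Finset.mem_sdiff.mp (hL h)).2 (by simp)
    exact (reflTransGen_branchEdges_of_mem_branch hT hw (hL.trans Finset.sdiff_subset) huw
      hsw (mem_branch_self hw.ne')).2
  · exact Relation.ReflTransGen.mono (fun _ _ h => (Finset.mem_inter.mp h).1) _ _ hsw

lemma reaches_iff_exists_branch {v : V} {S : Finset V} (hu : u ∉ S)
    {L : Finset (V × V)} (hL : L ⊆ treeEdges T \ {(v, u), (u, v)}) :
    Reaches L S u ↔ ∃ w ∈ (T.neighborFinset u).erase v,
      (w, u) ∈ L ∧ Reaches (L ∩ branchEdges T u w) S w := by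
  constructor
  · rintro ⟨s, hs, hsu⟩
    obtain ⟨w, hwu, hsw⟩ :=
      exists_branch_of_reflTransGen (hL.trans Finset.sdiff_subset) hsu
        (ne_of_mem_of_not_mem hs hu)
    have hwv : w ≠ v := by
      rintro rfl
      exact (Finset.mem_sdiff.mp (hL hwu)).2 (by simp)
    have hadj : T.Adj u w := (mem_treeEdges.mp (Finset.mem_sdiff.mp (hL hwu)).1).symm
    exact ⟨w, Finset.mem_erase.mpr ⟨hwv, (T.mem_neighborFinset u w).mpr hadj⟩, hwu, s, hs, hsw⟩
  · rintro ⟨w, -, hwu, s, hs, hsw⟩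
    exact ⟨s, hs,
      (Relation.ReflTransGen.mono (fun _ _ h => (Finset.mem_inter.mp h).1) _ _ hsw).tail hwu⟩

end Reach

section Boosting
variable [Fintype V] [DecidableEq V] {T : SimpleGraph V} [DecidableRel T.Adj] {u w : V}

lemma branchEdges_subset_sdiff (x : V) :
    branchEdges T u w ⊆ treeEdges T \ {(u, x), (x, u)} := by
  intro e he
  obtain ⟨-, h₁, h₂⟩ := mem_branchEdges.mp he
  refine Finset.mem_sdiff.mpr ⟨Finset.filter_subset _ _ he, ?_⟩
  rintro h
  rcases Finset.mem_insert.mp h with rfl | h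
  · exact ne_of_mem_branch h₁ rfl
  · exact ne_of_mem_branch h₂ (by rw [Finset.mem_singleton.mp h])

lemma apSub_eq_ap_branchEdges (hT : T.IsAcyclic) (hw : T.Adj u w) (p : V × V → ℝ)
    (S : Finset V) : apSub (treeEdges T) p S w u = ap (branchEdges T u w) p S w :=
  liveExpect_eq_of_inter p (branchEdges_subset_sdiff w) fun L hL => by
    rw [reaches_iff_reaches_inter_branchEdges hT hw hL S]

/-- `u` is activated through `w` iff the edge `(w, u)` is live and `w` is activated within
its branch; these two events are independent. -/
lemma liveExpect_insert_branchEdges (p : V × V → ℝ) (S : Finset V) :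
    liveExpect p (insert (w, u) (branchEdges T u w)) (fun M => 1 -
        (if (w, u) ∈ M then 1 else 0) * if Reaches (M ∩ branchEdges T u w) S w then 1 else 0) =
      1 - p (w, u) * ap (branchEdges T u w) p S w := by
  have hdisj : Disjoint {(w, u)} (branchEdges T u w) :=
    Finset.disjoint_singleton_left.mpr fun h => ne_of_mem_branch (mem_branchEdges.mp h).2.2 rfl
  calc _ = liveExpect p ({(w, u)} ∪ branchEdges T u w) (fun M => 1 -
          (if (w, u) ∈ M ∩ {(w, u)} then 1 else 0) *
            if Reaches (M ∩ branchEdges T u w) S w then 1 else 0) := by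
        rw [Finset.insert_eq]
        simp
    _ = 1 - liveExpect p {(w, u)} (fun M => if (w, u) ∈ M then 1 else 0) *
          ap (branchEdges T u w) p S w := by
        rw [liveExpect_one_sub, ap_eq_liveExpect, ← liveExpect_union_mul p hdisj]
    _ = 1 - p (w, u) * ap (branchEdges T u w) p S w := by
        rw [liveExpect_mem p (Finset.mem_singleton_self _)]

lemma pairwiseDisjoint_insert_branchEdges (hT : T.IsAcyclic) (I : Finset V)
    (hI : ∀ w ∈ I, T.Adj u w) :
    (I : Set V).PairwiseDisjoint fun w => insert (w, u) (branchEdges T u w) := by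
  intro w hw x hx hne
  refine Finset.disjoint_left.mpr fun e hew hex => ?_
  rcases Finset.mem_insert.mp hew with rfl | hew <;> rcases Finset.mem_insert.mp hex with h | hex
  · exact hne (Prod.ext_iff.mp h).1
  · exact ne_of_mem_branch (mem_branchEdges.mp hex).2.2 rfl
  · subst h
    exact ne_of_mem_branch (mem_branchEdges.mp hew).2.2 rfl
  · exact Set.disjoint_left.mp (disjoint_branch hT (hI w hw) (hI x hx) hne)
      (mem_branchEdges.mp hew).2.1 (mem_branchEdges.mp hex).2.1

lemma ap_eq_one_sub_prod_branches (hT : T.IsAcyclic) {v : V} {S : Finset V} (hu : u ∉ S)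
    (p : V × V → ℝ) :
    ap (treeEdges T \ {(v, u), (u, v)}) p S u =
      1 - ∏ w ∈ (T.neighborFinset u).erase v, (1 - p (w, u) * ap (branchEdges T u w) p S w) := by
  set I := (T.neighborFinset u).erase v
  set F : V → Finset (V × V) := fun w => insert (w, u) (branchEdges T u w)
  set g : V → Finset (V × V) → ℝ := fun w M => 1 -
    (if (w, u) ∈ M then 1 else 0) * if Reaches (M ∩ branchEdges T u w) S w then 1 else 0
  have hI : ∀ w ∈ I, T.Adj u w := fun w hw =>
    (T.mem_neighborFinset u w).mp (Finset.mem_of_mem_erase hw)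
  have hF : I.biUnion F ⊆ treeEdges T \ {(v, u), (u, v)} := by
    refine Finset.biUnion_subset.mpr fun w hw => Finset.insert_subset ?_ ?_
    · refine Finset.mem_sdiff.mpr ⟨mem_treeEdges.mpr (hI w hw).symm, ?_⟩
      simp [(Finset.mem_erase.mp hw).1, (hI w hw).ne']
    · rw [Finset.pair_comm]
      exact branchEdges_subset_sdiff v
  have hg : ∀ w ∈ I, ∀ L, g w (L ∩ I.biUnion F ∩ F w) = g w L := by
    intro w hw L
    rw [Finset.inter_assoc, Finset.inter_eq_right.mpr (Finset.subset_biUnion_of_mem F hw)]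
    simp only [g, F, Finset.mem_inter, Finset.mem_insert_self, and_true, Finset.inter_assoc,
      Finset.inter_eq_right.mpr (Finset.subset_insert _ _)]
  calc ap (treeEdges T \ {(v, u), (u, v)}) p S u
      = liveExpect p (treeEdges T \ {(v, u), (u, v)}) (fun L => 1 - ∏ w ∈ I, g w L) := by
        refine Finset.sum_congr rfl fun L hL => ?_
        simp only [g, ite_zero_mul_ite_zero, mul_one]
        exact congrArg _ (ite_eq_one_sub_prod_of_iff
          (reaches_iff_exists_branch hu (Finset.mem_powerset.mp hL)))
    _ = liveExpect p (I.biUnion F) (fun L => 1 - ∏ w ∈ I, g w (L ∩ F w)) :=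
        liveExpect_eq_of_inter p hF fun L _ =>
          congrArg _ (Finset.prod_congr rfl fun w hw => (hg w hw L).symm)
    _ = 1 - ∏ w ∈ I, (1 - p (w, u) * ap (branchEdges T u w) p S w) := by
        rw [liveExpect_one_sub, liveExpect_biUnion_prod p I F
          (pairwiseDisjoint_insert_branchEdges hT I hI)]
        exact congrArg _ (Finset.prod_congr rfl fun w _ => liveExpect_insert_branchEdges p S)

end Boosting

theorem apSub_eq_prod_neighbors_general [Fintype V] [DecidableEq V]
    (T : SimpleGraph V) [DecidableRel T.Adj] (hT : T.IsTree)
    (p p' : V × V → ℝ)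
    (S B : Finset V) (u : V) (hu : u ∉ S) (v : V) :
    apSub (treeEdges T) (pB p p' B) S u v =
      1 - ∏ w ∈ (T.neighborFinset u).erase v,
        (1 - apSub (treeEdges T) (pB p p' B) S w u * pB p p' B (w, u)) := by
  rw [apSub, ap_eq_one_sub_prod_branches hT.isAcyclic hu]
  refine congrArg _ (Finset.prod_congr rfl fun w hw => ?_)
  have huw : T.Adj u w := (T.mem_neighborFinset u w).mp (Finset.mem_of_mem_erase hw)
  rw [apSub_eq_ap_branchEdges hT.isAcyclic huw, mul_comm]

/-- On a bidirected tree with seed set `S` and boost set `B`, for every non-seed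
node `u` and every neighbor `v` of `u`:
`ap_B(u\v) = 1 − ∏_{w ∈ N(u) \ {v}} (1 − ap_B(w\u) · p^B_{wu})`. -/
theorem apSub_eq_prod_neighbors [Fintype V] [DecidableEq V]
    (T : SimpleGraph V) [DecidableRel T.Adj] (hT : T.IsTree)
    (p p' : V × V → ℝ)
    (hp0 : ∀ e, 0 ≤ p e) (hpp' : ∀ e, p e ≤ p' e) (hp'1 : ∀ e, p' e ≤ 1)
    (S B : Finset V) (u : V) (hu : u ∉ S) (v : V) (hv : T.Adj u v) :
    apSub (treeEdges T) (pB p p' B) S u v =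
      1 - ∏ w ∈ (T.neighborFinset u).erase v,
        (1 - apSub (treeEdges T) (pB p p' B) S w u * pB p p' B (w, u)) :=
  apSub_eq_prod_neighbors_general T hT p p' S B u hu v

end
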